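/- arXiv:1610.08389 — 3 statements merged into one kernel-verified Lean document; each statement's English description precedes it below -/
import Mathlib

section
/- Fix integers k ≥ 2 and t ≥ 1. For all sufficiently large n, every subgraph G of the Turán graph T_k(kn) that contains no copy of T_k(kt) satisfies e(G) ≤ t_k(kn) − n²/2. -/
open SimpleGraph

/-- `H` has a copy in `G` (an injective graph homomorphism). -/
def Contains {α β : Type*} (H : SimpleGraph α) (G : SimpleGraph β) : Prop :=
  ∃ f : H →g G, Function.Injective f

/-- Number of edges of a graph. -/
noncomputable def edgeCount {V : Type*} (G : SimpleGraph V) : ℕ := Nat.card G.edgeSet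

/-- `tk k n` is the number of edges of the `k`-partite Turán graph on `n` vertices. -/
noncomputable def tk (k n : ℕ) : ℕ := edgeCount (turanGraph n k)

open Finset


lemma cast_sub_ge (a b : ℕ) : (a:ℝ) - b ≤ ((a - b : ℕ):ℝ) := by
  rcases le_total b a with h | h
  · rw [Nat.cast_sub h]
  · simp [Nat.sub_eq_zero_of_le h]; linarith [(Nat.cast_le (α:=ℝ)).2 h]

lemma descFactorial_lower (d : ℕ) : ∀ t : ℕ, (d + 1 - t)^t ≤ d.descFactorial t := by
  intro t
  induction t with
  | zero => simp
  | succ t iht =>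
    rw [Nat.descFactorial_succ]
    have h1 : d + 1 - (t+1) = d - t := by omega
    rw [h1, pow_succ, mul_comm]
    exact Nat.mul_le_mul le_rfl (le_trans (Nat.pow_le_pow_left (by omega) t) iht)

lemma choose_lower (d t : ℕ) : (d + 1 - t)^t ≤ d.choose t * t^t :=
  calc (d + 1 - t)^t ≤ d.descFactorial t := descFactorial_lower d t
    _ = t.factorial * d.choose t := Nat.descFactorial_eq_factorial_mul_choose d t
    _ ≤ t^t * d.choose t := Nat.mul_le_mul (Nat.factorial_le_pow t) le_rfl
    _ = d.choose t * t^t := mul_comm _ _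

lemma choose_le_pow' (n t : ℕ) : n.choose t ≤ n^t :=
  calc n.choose t ≤ t.factorial * n.choose t := Nat.le_mul_of_pos_left _ t.factorial_pos
    _ = n.descFactorial t := (Nat.descFactorial_eq_factorial_mul_choose n t).symm
    _ ≤ n^t := Nat.descFactorial_le_pow n t

theorem box_lemma (t : ℕ) (ht : 1 ≤ t) :
    ∀ (k : ℕ) (δ : ℝ), 0 < δ → ∃ N : ℕ, 1 ≤ N ∧ ∀ n, N ≤ n →
      ∀ R : Finset (Fin k → Fin n), δ * (n:ℝ)^k ≤ R.card →
      ∃ S : Fin k → Finset (Fin n), (∀ i, (S i).card = t) ∧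
        ∀ c : Fin k → Fin n, (∀ i, c i ∈ S i) → c ∈ R := by
  intro k
  induction k with
  | zero =>
    intro δ hδ
    refine ⟨1, le_rfl, fun n _ R hR => ?_⟩
    have hne : R.Nonempty := by
      rw [← Finset.card_pos]
      have : (0:ℝ) < R.card := lt_of_lt_of_le (by positivity) (by simpa using hR)
      exact_mod_cast this
    obtain ⟨c₀, hc₀⟩ := hne
    refine ⟨fun i => i.elim0, fun i => i.elim0, fun c _ => ?_⟩
    have : c = c₀ := funext fun i => i.elim0
    rwa [this]
  | succ k ih =>
    intro δ hδ
    obtain ⟨N₀, _, hN₀⟩ := ih ((δ/(2*t))^t) (by positivity)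
    refine ⟨(max N₀ (max t ⌈2*(t:ℝ)/δ⌉₊)) + 1, by omega, fun n hn R hR => ?_⟩
    classical
    obtain ⟨t', rfl⟩ : ∃ t', t = t'+1 := ⟨t-1, by omega⟩
    set t := t'+1 with hteq
    have hnN₀ : N₀ ≤ n := by omega
    have htn : t ≤ n := by omega
    have hn0 : 0 < n := by omega
    have hnR : 2*(t:ℝ)/δ ≤ (n:ℝ) := by
      refine le_trans (Nat.le_ceil _) ?_
      exact_mod_cast (show ⌈2*(t:ℝ)/δ⌉₊ ≤ n by omega)
    have htR : (1:ℝ) ≤ t := by exact_mod_cast ht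
    have hnpos : (0:ℝ) < n := by exact_mod_cast hn0
    -- link sets
    set L : (Fin k → Fin n) → Finset (Fin n) :=
      fun p => univ.filter (fun x => Fin.cons x p ∈ R) with hL
    set d : (Fin k → Fin n) → ℕ := fun p => (L p).card with hd
    -- sum of degrees
    have hsum : ∑ p : Fin k → Fin n, d p = R.card := by
      rw [Finset.card_eq_sum_card_fiberwise (f := fun f => Fin.tail f) (t := univ)
        (fun x _ => mem_univ _)]
      refine Finset.sum_congr rfl (fun p _ => ?_)
      refine (Finset.card_bij' (fun f _ => f 0) (fun x _ => (Fin.cons x p : Fin (k+1) → Fin n)) ?_ ?_ ?_ ?_).symm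
      · intro f hf
        simp only [mem_filter] at hf
        simp only [hL, mem_filter, mem_univ, true_and]
        rw [← hf.2, Fin.cons_self_tail]
        exact hf.1
      · intro x hx
        simp only [hL, mem_filter, mem_univ, true_and] at hx
        simp only [mem_filter]
        exact ⟨hx, Fin.tail_cons _ _⟩
      · intro f hf
        simp only [mem_filter] at hf
        show Fin.cons (f 0) p = f
        conv_lhs => rw [← hf.2]
        exact Fin.cons_self_tail f
      · intro x _
        exact Fin.cons_zero _ _
    -- candidate sets
    set NT : Finset (Fin n) → Finset (Fin k → Fin n) :=
      fun T => univ.filter (fun p => T ⊆ L p) with hNT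
    -- double counting
    have hdc : ∑ T ∈ powersetCard t (univ : Finset (Fin n)), ((NT T).card) =
        ∑ p : Fin k → Fin n, (d p).choose t := by
      have h1 : ∀ T, (NT T).card = ∑ p : Fin k → Fin n, if T ⊆ L p then 1 else 0 := by
        intro T; rw [hNT]; exact Finset.card_filter _ _
      have h2 : ∀ p, (d p).choose t =
          ∑ T ∈ powersetCard t (univ : Finset (Fin n)), if T ⊆ L p then 1 else 0 := by
        intro p
        rw [← Finset.card_filter, hd, ← Finset.card_powersetCard]
        congr 1
        ext T
        simp only [mem_powersetCard, mem_filter, subset_univ, true_and]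
        tauto
      simp only [h1, h2]
      exact Finset.sum_comm
    -- real-valued estimates
    set f : (Fin k → Fin n) → ℝ := fun p => ((d p + 1 - t : ℕ):ℝ) with hf
    have hfnonneg : ∀ p ∈ (univ : Finset (Fin k → Fin n)), 0 ≤ f p := by
      intro p _; rw [hf]; positivity
    have hcard_univ : ((univ : Finset (Fin k → Fin n)).card) = n^k := by
      simp [Fintype.card_fun]
    have hsumf : δ * (n:ℝ)^(k+1) - t * (n:ℝ)^k ≤ ∑ p, f p := by
      have hterm : ∀ p, (d p : ℝ) - t ≤ f p := by
        intro p
        refine le_trans ?_ (cast_sub_ge (d p + 1) t)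
        push_cast; linarith
      calc δ * (n:ℝ)^(k+1) - t * (n:ℝ)^k ≤ (R.card : ℝ) - t * (n:ℝ)^k := by linarith
        _ = (∑ p, (d p : ℝ)) - ∑ p : Fin k → Fin n, (t:ℝ) := by
            rw [← hsum]; push_cast
            rw [Finset.sum_const, hcard_univ]; push_cast; ring
        _ = ∑ p, ((d p : ℝ) - t) := by rw [Finset.sum_sub_distrib]
        _ ≤ ∑ p, f p := Finset.sum_le_sum (fun p _ => hterm p)
    have hhalf : (δ/2) * (n:ℝ)^(k+1) ≤ δ * (n:ℝ)^(k+1) - t * (n:ℝ)^k := by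
      have h1 : (t:ℝ) ≤ (δ/2) * n := by
        rw [div_le_iff₀ hδ] at hnR
        nlinarith
      have h2 : (0:ℝ) ≤ (n:ℝ)^k := by positivity
      have h3 : (t:ℝ) * (n:ℝ)^k ≤ (δ/2) * n * (n:ℝ)^k := by nlinarith
      rw [pow_succ]
      nlinarith
    -- power mean
    have hpm : (∑ p, f p) ^ t / ((n:ℝ)^k) ^ t' ≤ ∑ p, (f p)^t := by
      have := pow_sum_div_card_le_sum_pow (s := univ) (f := f) hfnonneg t'
      rwa [hcard_univ, Nat.cast_pow] at this
    have hchoose : ∀ p, (f p)^t ≤ ((d p).choose t : ℝ) * (t:ℝ)^t := by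
      intro p
      rw [hf]
      calc (((d p + 1 - t : ℕ):ℝ))^t = (((d p + 1 - t)^t : ℕ):ℝ) := by push_cast; ring
        _ ≤ (((d p).choose t * t^t : ℕ):ℝ) := by exact_mod_cast choose_lower (d p) t
        _ = ((d p).choose t : ℝ) * (t:ℝ)^t := by push_cast; ring
    have hkey : (δ/2)^t * (n:ℝ)^(k+t) ≤ (∑ p, ((d p).choose t : ℝ)) * (t:ℝ)^t := by
      calc (δ/2)^t * (n:ℝ)^(k+t) = ((δ/2) * (n:ℝ)^(k+1))^t / ((n:ℝ)^k)^t' := by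
            rw [eq_div_iff (by positivity)]; rw [hteq]; ring
        _ ≤ (∑ p, f p)^t / ((n:ℝ)^k)^t' := by
            have hpow : ((δ/2) * (n:ℝ)^(k+1))^t ≤ (∑ p, f p)^t :=
              pow_le_pow_left₀ (by positivity) (hhalf.trans hsumf) t
            gcongr
        _ ≤ ∑ p, (f p)^t := hpm
        _ ≤ (∑ p, ((d p).choose t:ℝ)) * (t:ℝ)^t := by
            rw [Finset.sum_mul]
            exact Finset.sum_le_sum (fun p _ => hchoose p)
    have htpos : (0:ℝ) < (t:ℝ)^t := by positivity
    have hδ't : (δ/(2*(t:ℝ)))^t * (t:ℝ)^t = (δ/2)^t := by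
      rw [← mul_pow]
      congr 1
      field_simp
    have hchoosesum : (δ/(2*(t:ℝ)))^t * (n:ℝ)^(k+t) ≤ ∑ p, ((d p).choose t : ℝ) := by
      refine le_of_mul_le_mul_right ?_ htpos
      calc (δ/(2*(t:ℝ)))^t * (n:ℝ)^(k+t) * (t:ℝ)^t
          = (δ/2)^t * (n:ℝ)^(k+t) := by rw [mul_right_comm, hδ't]
        _ ≤ (∑ p, ((d p).choose t:ℝ)) * (t:ℝ)^t := hkey
    -- pigeonhole
    have hTne : (powersetCard t (univ : Finset (Fin n))).Nonempty := by
      rw [Finset.powersetCard_nonempty]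
      simpa using htn
    have hpigeon : ∃ T ∈ powersetCard t (univ : Finset (Fin n)),
        (δ/(2*(t:ℝ)))^t * (n:ℝ)^k ≤ ((NT T).card : ℝ) := by
      refine Finset.exists_le_of_sum_le hTne ?_
      have hcardpc : (powersetCard t (univ : Finset (Fin n))).card = n.choose t := by
        rw [Finset.card_powersetCard]; simp
      calc ∑ _T ∈ powersetCard t (univ : Finset (Fin n)), (δ/(2*(t:ℝ)))^t * (n:ℝ)^k
          = (n.choose t : ℝ) * ((δ/(2*(t:ℝ)))^t * (n:ℝ)^k) := by
            rw [Finset.sum_const, hcardpc, nsmul_eq_mul]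
        _ ≤ (n:ℝ)^t * ((δ/(2*(t:ℝ)))^t * (n:ℝ)^k) := by
            have : ((n.choose t : ℕ):ℝ) ≤ ((n^t : ℕ):ℝ) := by exact_mod_cast choose_le_pow' n t
            push_cast at this
            have hpos : (0:ℝ) ≤ (δ/(2*(t:ℝ)))^t * (n:ℝ)^k := by positivity
            nlinarith
        _ = (δ/(2*(t:ℝ)))^t * (n:ℝ)^(k+t) := by rw [pow_add]; ring
        _ ≤ ∑ p, ((d p).choose t : ℝ) := hchoosesum
        _ = ∑ T ∈ powersetCard t (univ : Finset (Fin n)), ((NT T).card : ℝ) := by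
            exact_mod_cast congrArg (fun x : ℕ => (x:ℝ)) hdc.symm
    obtain ⟨T, hTmem, hTge⟩ := hpigeon
    have hTcard : T.card = t := (Finset.mem_powersetCard.1 hTmem).2
    obtain ⟨S', hS'card, hS'box⟩ := hN₀ n hnN₀ (NT T) hTge
    refine ⟨Fin.cons T S', ?_, ?_⟩
    · intro i
      refine Fin.cases ?_ ?_ i
      · rw [Fin.cons_zero]; exact hTcard
      · intro j; rw [Fin.cons_succ]; exact hS'card j
    · intro c hc
      have h0 : c 0 ∈ T := by have := hc 0; rwa [Fin.cons_zero] at this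
      have htl : Fin.tail c ∈ NT T := by
        refine hS'box (Fin.tail c) (fun i => ?_)
        have := hc i.succ
        rwa [Fin.cons_succ] at this
      rw [hNT] at htl
      simp only [mem_filter, mem_univ, true_and] at htl
      have := htl h0
      rw [hL] at this
      simp only [mem_filter, mem_univ, true_and] at this
      rwa [Fin.cons_self_tail] at this

lemma edgeCount_eq_card {V : Type*} (G : SimpleGraph V) [Fintype G.edgeSet] :
    edgeCount G = G.edgeFinset.card := by
  rw [edgeCount, Nat.card_eq_fintype_card, SimpleGraph.edgeFinset, Set.toFinset_card]

theorem stmt2 (k t : ℕ) (hk : 2 ≤ k) (ht : 1 ≤ t) :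
    ∃ N : ℕ, ∀ n ≥ N, ∀ G : SimpleGraph (Fin (k * n)),
      G ≤ turanGraph (k * n) k →
      ¬ Contains (turanGraph (k * t) k) G →
      (edgeCount G : ℝ) ≤ (tk k (k * n) : ℝ) - (n : ℝ) ^ 2 / 2 := by
  classical
  obtain ⟨N₀, hN₀1, hN₀⟩ := box_lemma t ht k (1/2) (by norm_num)
  refine ⟨N₀, fun n hn G hle hnc => ?_⟩
  by_contra hcon
  push_neg at hcon
  have hk0 : 0 < k := by omega
  have hn0 : 0 < n := by omega
  -- missing graph
  have hsub : G.edgeFinset ⊆ (turanGraph (k*n) k).edgeFinset := by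
    rw [SimpleGraph.edgeFinset_subset_edgeFinset]; exact hle
  have hMcard : ((turanGraph (k*n) k) \ G).edgeFinset.card
      = (turanGraph (k*n) k).edgeFinset.card - G.edgeFinset.card := by
    rw [SimpleGraph.edgeFinset_sdiff, Finset.card_sdiff_of_subset hsub]
  have hGcard : (edgeCount G : ℝ) = G.edgeFinset.card := by rw [edgeCount_eq_card]
  have hTcard : (tk k (k*n) : ℝ) = (turanGraph (k*n) k).edgeFinset.card := by
    rw [tk, edgeCount_eq_card]
  have hmlt : ((((turanGraph (k*n) k) \ G).edgeFinset.card : ℕ) : ℝ) < (n:ℝ)^2/2 := by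
    have hle' : G.edgeFinset.card ≤ (turanGraph (k*n) k).edgeFinset.card :=
      Finset.card_le_card hsub
    have heq : ((((turanGraph (k*n) k) \ G).edgeFinset.card : ℕ) : ℝ)
        = ((turanGraph (k*n) k).edgeFinset.card : ℝ) - G.edgeFinset.card := by
      rw [hMcard]
      exact Nat.cast_sub hle'
    rw [heq, ← hTcard, ← hGcard]
    linarith
  -- encoding
  have hencLT : ∀ (r : Fin k) (q : Fin n), q.1 * k + r.1 < k * n := by
    intro r q
    have h1 : (q.1+1) * k ≤ n * k := Nat.mul_le_mul_right k q.2
    have h2 := r.2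
    calc q.1*k + r.1 < q.1*k + k := by omega
      _ = (q.1+1)*k := by ring
      _ ≤ n*k := h1
      _ = k*n := Nat.mul_comm n k
  have mod_aux : ∀ q r : ℕ, r < k → (q*k + r) % k = r := by
    intro q r hr; rw [add_comm, Nat.add_mul_mod_self_right, Nat.mod_eq_of_lt hr]
  have div_aux : ∀ q r : ℕ, r < k → (q*k + r) / k = q := by
    intro q r hr; rw [add_comm, Nat.add_mul_div_right _ _ hk0, Nat.div_eq_of_lt hr, zero_add]
  set enc : Fin k → Fin n → Fin (k*n) := fun r q => ⟨q.1 * k + r.1, hencLT r q⟩ with henc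
  have enc_mod : ∀ (r : Fin k) (q : Fin n), ((enc r q : Fin (k*n)) : ℕ) % k = r.1 := by
    intro r q
    show (q.1*k + r.1) % k = r.1
    rw [add_comm, Nat.add_mul_mod_self_right]
    exact Nat.mod_eq_of_lt r.2
  have enc_div : ∀ (r : Fin k) (q : Fin n), ((enc r q : Fin (k*n)) : ℕ) / k = q.1 := by
    intro r q
    show (q.1*k + r.1) / k = q.1
    rw [add_comm, Nat.add_mul_div_right _ _ hk0, Nat.div_eq_of_lt r.2, zero_add]
  have Tadj : ∀ u v : Fin (k*n), (turanGraph (k*n) k).Adj u v ↔ (u:ℕ)%k ≠ (v:ℕ)%k := by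
    intro u v; simp [turanGraph]
  -- transversal set
  set R : Finset (Fin k → Fin n) :=
    univ.filter (fun c => ∀ r s : Fin k, r ≠ s → G.Adj (enc r (c r)) (enc s (c s))) with hR
  set decr : Fin (k*n) → Fin k := fun x => ⟨x.1 % k, Nat.mod_lt _ hk0⟩ with hdecr
  set decq : Fin (k*n) → Fin n := fun x => ⟨x.1 / k, Nat.div_lt_of_lt_mul x.2⟩ with hdecq
  set B : Sym2 (Fin (k*n)) → Finset (Fin k → Fin n) :=
    fun e => univ.filter (fun c => ∀ x ∈ e, c (decr x) = decq x) with hB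
  have hcover : (univ \ R) ⊆ ((turanGraph (k*n) k) \ G).edgeFinset.biUnion B := by
    intro c hc
    rw [Finset.mem_sdiff, hR, Finset.mem_filter] at hc
    have hc' : ¬ ∀ r s : Fin k, r ≠ s → G.Adj (enc r (c r)) (enc s (c s)) := by
      intro h; exact hc.2 ⟨Finset.mem_univ _, h⟩
    push_neg at hc'
    obtain ⟨r, s, hrs, hnadj⟩ := hc'
    have hMadj : ((turanGraph (k*n) k) \ G).Adj (enc r (c r)) (enc s (c s)) := by
      rw [SimpleGraph.sdiff_adj]
      refine ⟨?_, hnadj⟩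
      rw [Tadj, enc_mod, enc_mod]
      exact fun h => hrs (Fin.ext h)
    refine Finset.mem_biUnion.2 ⟨s(enc r (c r), enc s (c s)), ?_, ?_⟩
    · rw [SimpleGraph.mem_edgeFinset]; exact hMadj
    · rw [hB, Finset.mem_filter]
      refine ⟨Finset.mem_univ _, ?_⟩
      intro x hx
      rw [Sym2.mem_iff] at hx
      rcases hx with rfl | rfl
      · have h1 : decr (enc r (c r)) = r := Fin.ext (enc_mod r (c r))
        have h2 : decq (enc r (c r)) = c r := Fin.ext (enc_div r (c r))
        rw [h1, h2]
      · have h1 : decr (enc s (c s)) = s := Fin.ext (enc_mod s (c s))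
        have h2 : decq (enc s (c s)) = c s := Fin.ext (enc_div s (c s))
        rw [h1, h2]
  have hBcard : ∀ e ∈ ((turanGraph (k*n) k) \ G).edgeFinset, (B e).card ≤ n^(k-2) := by
    intro e he
    induction e using Sym2.ind with
    | _ u v =>
      rw [SimpleGraph.mem_edgeFinset, SimpleGraph.mem_edgeSet] at he
      have hTadj' : (turanGraph (k*n) k).Adj u v := by
        rw [SimpleGraph.sdiff_adj] at he; exact he.1
      have hne : decr u ≠ decr v := by
        rw [Tadj] at hTadj'
        intro h
        exact hTadj' (congrArg Fin.val h)
      set a := decr u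
      set b := decr v
      have hsubF : B s(u,v) ⊆ univ.filter
          (fun c : Fin k → Fin n => c a = decq u ∧ c b = decq v) := by
        intro c hc
        rw [hB, Finset.mem_filter] at hc
        rw [Finset.mem_filter]
        exact ⟨Finset.mem_univ _, hc.2 u (Sym2.mem_mk_left u v), hc.2 v (Sym2.mem_mk_right u v)⟩
      refine le_trans (Finset.card_le_card hsubF) ?_
      have hinj : ∀ c₁ ∈ univ.filter (fun c : Fin k → Fin n => c a = decq u ∧ c b = decq v),
          ∀ c₂ ∈ univ.filter (fun c : Fin k → Fin n => c a = decq u ∧ c b = decq v),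
          (fun (i : {i : Fin k // i ≠ a ∧ i ≠ b}) => c₁ i.1) =
          (fun (i : {i : Fin k // i ≠ a ∧ i ≠ b}) => c₂ i.1) → c₁ = c₂ := by
        intro c₁ h₁ c₂ h₂ hres
        rw [Finset.mem_filter] at h₁ h₂
        funext i
        by_cases hia : i = a
        · rw [hia, h₁.2.1, h₂.2.1]
        · by_cases hib : i = b
          · rw [hib, h₁.2.2, h₂.2.2]
          · exact congrFun hres ⟨i, hia, hib⟩
      have hcard2 : Fintype.card {i : Fin k // i ≠ a ∧ i ≠ b} = k - 2 := by
        rw [Fintype.card_subtype]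
        have : (univ.filter (fun i : Fin k => i ≠ a ∧ i ≠ b)) = (univ.erase a).erase b := by
          ext i
          simp only [Finset.mem_filter, Finset.mem_erase, Finset.mem_univ, and_true, true_and]
          tauto
        rw [this,
          Finset.card_erase_of_mem (Finset.mem_erase.2 ⟨hne.symm, Finset.mem_univ _⟩),
          Finset.card_erase_of_mem (Finset.mem_univ _), Finset.card_univ, Fintype.card_fin]
        omega
      calc (univ.filter (fun c : Fin k → Fin n => c a = decq u ∧ c b = decq v)).card
          ≤ (univ : Finset ({i : Fin k // i ≠ a ∧ i ≠ b} → Fin n)).card := by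
            apply Finset.card_le_card_of_injOn (fun c => fun i => c i.1)
            · intro c _; exact Finset.mem_univ _
            · intro c₁ h₁ c₂ h₂ h
              exact hinj c₁ h₁ c₂ h₂ h
        _ = n^(k-2) := by rw [Finset.card_univ, Fintype.card_fun, hcard2, Fintype.card_fin]
  -- size of R
  have hRbound : ((univ \ R).card : ℕ) ≤ ((turanGraph (k*n) k) \ G).edgeFinset.card * n^(k-2) := by
    refine le_trans (Finset.card_le_card hcover) ?_
    refine le_trans Finset.card_biUnion_le ?_
    refine le_trans (Finset.sum_le_card_nsmul _ _ _ hBcard) ?_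
    rw [smul_eq_mul]
  have hcard_univ : ((univ : Finset (Fin k → Fin n)).card) = n^k := by
    simp [Fintype.card_fun]
  have hRR : (1/2 : ℝ) * (n:ℝ)^k ≤ R.card := by
    have h1 : (univ \ R).card = n^k - R.card := by
      rw [Finset.card_sdiff_of_subset (Finset.subset_univ R), hcard_univ]
    have h2 : R.card ≤ n^k := hcard_univ ▸ Finset.card_le_univ R
    have h3 : ((univ \ R).card : ℝ) = (n:ℝ)^k - R.card := by
      rw [h1, Nat.cast_sub h2]; push_cast; ring
    have h4 : ((univ \ R).card:ℝ) ≤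
        ((((turanGraph (k*n) k) \ G).edgeFinset.card : ℕ):ℝ) * (n:ℝ)^(k-2) := by
      exact_mod_cast hRbound
    have h5 : ((((turanGraph (k*n) k) \ G).edgeFinset.card : ℕ):ℝ) * (n:ℝ)^(k-2)
        ≤ (n:ℝ)^2/2 * (n:ℝ)^(k-2) :=
      mul_le_mul_of_nonneg_right hmlt.le (by positivity)
    have h6 : (n:ℝ)^2/2 * (n:ℝ)^(k-2) = (n:ℝ)^k/2 := by
      rw [div_mul_eq_mul_div, ← pow_add]
      congr 2
      omega
    linarith
  obtain ⟨S, hScard, hSbox⟩ := hN₀ n hn R hRR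
  -- build the embedding
  set σ : (r : Fin k) → (Fin t ↪o Fin n) := fun r => (S r).orderEmbOfFin (hScard r) with hσ
  set φ : Fin (k*t) → Fin (k*n) := fun x =>
    enc ⟨x.1 % k, Nat.mod_lt _ hk0⟩
      (σ ⟨x.1 % k, Nat.mod_lt _ hk0⟩ ⟨x.1 / k, Nat.div_lt_of_lt_mul x.2⟩) with hφ
  have hGadj : ∀ r s : Fin k, r ≠ s → ∀ (qa qb : Fin t),
      G.Adj (enc r (σ r qa)) (enc s (σ s qb)) := by
    intro r s hrs qa qb
    set c : Fin k → Fin n :=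
      fun i => if i = r then σ r qa else if i = s then σ s qb else σ i ⟨0, ht⟩ with hc
    have hcmem : ∀ i, c i ∈ S i := by
      intro i
      simp only [hc]
      by_cases h1 : i = r
      · subst h1; simp only [if_pos rfl]; exact Finset.orderEmbOfFin_mem _ _ _
      · by_cases h2 : i = s
        · subst h2; simp only [if_neg h1, if_pos rfl]; exact Finset.orderEmbOfFin_mem _ _ _
        · simp only [if_neg h1, if_neg h2]; exact Finset.orderEmbOfFin_mem _ _ _
    have hcR : c ∈ R := hSbox c hcmem
    rw [hR, Finset.mem_filter] at hcR
    have hG := hcR.2 r s hrs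
    have h1 : c r = σ r qa := by simp [hc]
    have h2 : c s = σ s qb := by simp [hc, Ne.symm hrs]
    rw [h1, h2] at hG
    exact hG
  have hadj : ∀ {a b : Fin (k*t)}, (turanGraph (k*t) k).Adj a b → G.Adj (φ a) (φ b) := by
    intro a b hab
    have hab' : (a:ℕ) % k ≠ (b:ℕ) % k := by simpa [turanGraph] using hab
    exact hGadj ⟨a.1 % k, Nat.mod_lt _ hk0⟩ ⟨b.1 % k, Nat.mod_lt _ hk0⟩
      (fun h => hab' (congrArg Fin.val h)) _ _
  have hinjφ : Function.Injective φ := by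
    intro a b h
    have hmod : a.1 % k = b.1 % k := by
      have h1 := congrArg (fun x : Fin (k*n) => x.1 % k) h
      simp only [hφ] at h1
      rwa [mod_aux _ _ (Nat.mod_lt _ hk0), mod_aux _ _ (Nat.mod_lt _ hk0)] at h1
    have hdiv : a.1 / k = b.1 / k := by
      have h2 := congrArg (fun x : Fin (k*n) => x.1 / k) h
      simp only [hφ] at h2
      rw [div_aux _ _ (Nat.mod_lt _ hk0), div_aux _ _ (Nat.mod_lt _ hk0)] at h2
      have hr : (⟨a.1 % k, Nat.mod_lt _ hk0⟩ : Fin k) = ⟨b.1 % k, Nat.mod_lt _ hk0⟩ :=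
        Fin.ext hmod
      rw [← hr] at h2
      have h3 := (σ ⟨a.1 % k, Nat.mod_lt _ hk0⟩).injective (Fin.ext h2)
      exact congrArg Fin.val h3
    have e1 := Nat.div_add_mod a.1 k
    have e2 := Nat.div_add_mod b.1 k
    refine Fin.ext ?_
    rw [← e1, ← e2, hdiv, hmod]
  exact hnc ⟨⟨φ, hadj⟩, hinjφ⟩
end

section
/- Let k ≥ 2 and t ≥ 1 and ε > 0. Then for n sufficiently large, every graph G on n vertices with e(G) ≥ (1 − 1/(k−1) + ε)·binomial(n,2) contains a copy of the Turán graph T_k(kt). -/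
/-!
Mathlib proves the minimum-degree form of the Erdős–Stone theorem: a graph on `m` vertices with
minimum degree at least `(1 - 1/r + ε) m` contains `K_{r+1}(t)` once `m` is large. The edge form
reduces to it by repeatedly deleting a vertex of degree at most `c (|V| - 1)`, where
`c = 1 - 1/r + 3ε/4`. Each deletion removes at most `c (C(|V|,2) - C(|V|-1,2))` edges, so the
surplus `e(G) - c C(|V|,2) ≥ (ε/4) C(n,2)` never decreases. Since `e(G) ≤ C(|V|,2)`, the process
stops at a subgraph on `m` vertices with `C(m,2) ≥ (ε/4) C(n,2)`, all of whose degrees exceed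
`c (m - 1) ≥ (1 - 1/r + ε/2) m`.
-/

open SimpleGraph

open Finset Filter Fintype

theorem contains_iff_isContained {α β : Type*} {H : SimpleGraph α} {G : SimpleGraph β} :
    Contains H G ↔ H ⊑ G :=
  ⟨fun ⟨f, hf⟩ ↦ ⟨⟨f, hf⟩⟩, fun ⟨f⟩ ↦ ⟨f.toHom, f.injective⟩⟩

theorem edgeCount_eq_card_edgeFinset {V : Type*} [Fintype V] (G : SimpleGraph V)
    [DecidableRel G.Adj] : edgeCount G = #G.edgeFinset := by
  rw [edgeCount, Nat.card_eq_fintype_card, edgeFinset_card]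

theorem tendsto_natCast_choose_two_atTop :
    Tendsto (fun n : ℕ ↦ (n.choose 2 : ℝ)) atTop atTop := by
  refine tendsto_atTop_mono (fun n ↦ ?_)
    (tendsto_atTop_add_const_right _ (-1 : ℝ) tendsto_natCast_atTop_atTop)
  rw [Nat.cast_choose_two]
  rcases n with _ | _ | n
  · norm_num
  · norm_num
  · push_cast
    nlinarith [(Nat.cast_nonneg n : (0 : ℝ) ≤ n)]

namespace SimpleGraph

universe u

theorem card_edgeFinset_induce_compl_singleton_add_degree {V : Type*} [Fintype V] [DecidableEq V]
    (G : SimpleGraph V) [DecidableRel G.Adj] (v : V) :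
    #(G.induce {v}ᶜ).edgeFinset + G.degree v = #G.edgeFinset := by
  rw [card_edgeFinset_induce_compl_singleton, card_edgeFinset_deleteIncidenceSet,
    Nat.sub_add_cancel (G.degree_le_card_edgeFinset v)]

theorem exists_isContained_forall_lt_degree {c : ℝ} (hc : 0 ≤ c) (D : ℝ) (n : ℕ) :
    ∀ {V : Type u} [Fintype V] (G : SimpleGraph V) [DecidableRel G.Adj], card V = n →
      c * n.choose 2 + D ≤ #G.edgeFinset →
      ∃ (W : Type u) (_ : Fintype W) (H : SimpleGraph W) (_ : DecidableRel H.Adj),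
        H ⊑ G ∧ D ≤ (card W).choose 2 ∧ ∀ w, c * (card W - 1) < H.degree w := by
  induction n using Nat.strong_induction_on with
  | _ n ih =>
  intro V _ G _ hV hE
  by_cases hstop : ∀ w, c * (card V - 1) < G.degree w
  · refine ⟨V, _, G, _, .rfl, ?_, hstop⟩
    have hE_le : (#G.edgeFinset : ℝ) ≤ (card V).choose 2 :=
      mod_cast G.card_edgeFinset_le_card_choose_two
    subst hV
    nlinarith [(Nat.cast_nonneg ((card V).choose 2) : (0 : ℝ) ≤ _)]
  classical
  obtain ⟨v, hv⟩ := not_forall.mp hstop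
  rw [not_lt] at hv
  have : Nonempty V := ⟨v⟩
  obtain ⟨m, rfl⟩ : ∃ m, n = m + 1 :=
    Nat.exists_eq_succ_of_ne_zero (hV ▸ Fintype.card_ne_zero)
  have hcard : card ({v}ᶜ : Set V) = m := by
    rw [Fintype.card_compl_set, hV, Fintype.card_unique, Nat.add_sub_cancel]
  have hE' : c * m.choose 2 + D ≤ #(G.induce {v}ᶜ).edgeFinset := by
    have hdelete : (#(G.induce {v}ᶜ).edgeFinset : ℝ) + G.degree v = #G.edgeFinset :=
      mod_cast G.card_edgeFinset_induce_compl_singleton_add_degree v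
    have hchoose : ((m + 1).choose 2 : ℝ) = m.choose 2 + m := by
      rw [Nat.choose_succ_succ', Nat.choose_one_right]
      push_cast
      ring
    rw [hV, Nat.cast_add_one, add_sub_cancel_right] at hv
    rw [hchoose] at hE
    linarith
  obtain ⟨W, _, H, _, hH, hD, hdeg⟩ := ih m m.lt_succ_self _ hcard hE'
  exact ⟨W, _, H, _, hH.trans (Copy.induce G _).isContained, hD, hdeg⟩

theorem le_minDegree_of_forall_lt_degree {W : Type*} [Fintype W] [Nonempty W]
    {H : SimpleGraph W} [DecidableRel H.Adj] {c δ : ℝ} (hc : c ≤ δ * card W)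
    (h : ∀ w, c * (card W - 1) < H.degree w) : (c - δ) * card W ≤ H.minDegree := by
  obtain ⟨w, hw⟩ := H.exists_minimal_degree_vertex
  rw [hw]
  linarith [h w]

theorem eventually_isContained_of_card_edgeFinset_of_minDegree {α : Type*} {K : SimpleGraph α}
    {a ε : ℝ} (ha : 0 ≤ a) (hε : 0 < ε)
    (hK : ∀ᶠ m in atTop, ∀ {H : SimpleGraph (Fin m)} [DecidableRel H.Adj],
      H.minDegree ≥ (a + ε / 2) * m → K ⊑ H) :
    ∀ᶠ n in atTop, ∀ {G : SimpleGraph (Fin n)} [DecidableRel G.Adj],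
      #G.edgeFinset ≥ (a + ε) * n.choose 2 → K ⊑ G := by
  classical
  obtain ⟨M, hM⟩ := eventually_atTop.mp hK
  set c := a + 3 * ε / 4 with hc_def
  set M₀ := max (max M 1) ⌈4 * c / ε⌉₊
  filter_upwards [(tendsto_natCast_choose_two_atTop.const_mul_atTop
    (by positivity : 0 < ε / 4)).eventually_gt_atTop (M₀.choose 2 : ℝ)] with n hn G _ hG
  have hsplit : c * n.choose 2 + ε / 4 * n.choose 2 = (a + ε) * n.choose 2 := by
    rw [hc_def]
    ring
  obtain ⟨W, _, H, _, hHG, hD, hdeg⟩ :=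
    exists_isContained_forall_lt_degree (by positivity : 0 ≤ c) (ε / 4 * n.choose 2) n G
      (Fintype.card_fin n) (by linarith)
  have hM₀ : M₀ ≤ card W := by
    by_contra! h
    have : ((card W).choose 2 : ℝ) ≤ M₀.choose 2 := mod_cast Nat.choose_le_choose 2 h.le
    linarith
  have : Nonempty W := card_pos_iff.mp (by omega)
  have hc : c ≤ ε / 4 * card W := by
    have := (Nat.le_ceil (4 * c / ε)).trans (Nat.cast_le.mpr ((le_max_right _ _).trans hM₀))
    rw [div_le_iff₀ hε] at this
    linarith
  have hmin := le_minDegree_of_forall_lt_degree hc hdeg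
  refine (hM (card W) ((le_max_left _ _ |>.trans (le_max_left _ _)).trans hM₀) ?_).trans
    ((H.overFinIso rfl).symm.isContained.trans hHG)
  rw [← (H.overFinIso rfl).minDegree_eq]
  convert hmin using 2
  rw [hc_def]
  ring

end SimpleGraph

theorem stmt3_general (k t : ℕ) (hk : 2 ≤ k) (ε : ℝ) (hε : 0 < ε) :
    ∃ N : ℕ, ∀ n ≥ N, ∀ G : SimpleGraph (Fin n),
      (1 - 1 / ((k : ℝ) - 1) + ε) * (n.choose 2 : ℝ) ≤ (edgeCount G : ℝ) →
      Contains (turanGraph (k * t) k) G := by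
  classical
  obtain ⟨r, rfl⟩ : ∃ r, k = r + 1 := ⟨k - 1, by omega⟩
  have hK := eventually_isContained_of_card_edgeFinset_of_minDegree
    (sub_nonneg.mpr (one_div (r : ℝ) ▸ Nat.cast_inv_le_one r)) hε
    (eventually_completeEquipartiteGraph_isContained_of_minDegree (half_pos hε) r t)
  obtain ⟨N, hN⟩ := eventually_atTop.mp hK
  refine ⟨N, fun n hn G hG ↦ ?_⟩
  rw [contains_iff_isContained, ← isContained_congr_left completeEquipartiteGraph.turanGraph]
  rw [edgeCount_eq_card_edgeFinset, Nat.cast_add_one, add_sub_cancel_right] at hG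
  exact hN n hn hG

theorem stmt3 (k t : ℕ) (hk : 2 ≤ k) (ht : 1 ≤ t) (ε : ℝ) (hε : 0 < ε) :
    ∃ N : ℕ, ∀ n ≥ N, ∀ G : SimpleGraph (Fin n),
      (1 - 1 / ((k : ℝ) - 1) + ε) * (n.choose 2 : ℝ) ≤ (edgeCount G : ℝ) →
      Contains (turanGraph (k * t) k) G :=
  stmt3_general k t hk ε hε
end

section
/- For any graph G, the Mycielskian M(G) satisfies χ(M(G)) = χ(G) + 1. -/
/-!
A colouring of `G` extends to `M(G)` with one fresh colour, reserved for the apex, by colouring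
each copy `v'` like `v`. Conversely, `v'` is adjacent to every neighbour of `v` and never has the
colour of the apex, so in a colouring of `M(G)` the vertices of `G` coloured like the apex can take
the colour of their copies instead, leaving a colouring of `G` without the apex's colour.
-/

open SimpleGraph

/-- The Mycielskian of a graph `G`: vertices are `V ⊕ V ⊕ {u}`, with the original
edges, edges from each original vertex to the copies of its neighbours, and edges
from every copy to the apex `u`. -/
def mycielskian {V : Type*} (G : SimpleGraph V) : SimpleGraph (V ⊕ V ⊕ Unit) :=
  SimpleGraph.fromRel (fun x y =>
    match x, y with
    | Sum.inl v, Sum.inl w => G.Adj v w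
    | Sum.inl v, Sum.inr (Sum.inl w) => G.Adj v w
    | Sum.inr (Sum.inl _), Sum.inr (Sum.inr _) => True
    | _, _ => False)

lemma ENat.eq_of_forall_le_natCast_iff {m n : ℕ∞} (h : ∀ a : ℕ, m ≤ a ↔ n ≤ a) : m = n :=
  WithTop.eq_of_forall_le_coe_iff h

namespace SimpleGraph

variable {V α : Type*} {G : SimpleGraph V} {v w : V}

@[simp]
lemma mycielskian_adj_inl_inl : (mycielskian G).Adj (.inl v) (.inl w) ↔ G.Adj v w := by
  simpa [mycielskian, G.adj_comm w v] using G.ne_of_adj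

@[simp]
lemma mycielskian_adj_inl_inr_inl : (mycielskian G).Adj (.inl v) (.inr (.inl w)) ↔ G.Adj v w := by
  simp [mycielskian]

lemma mycielskian_adj_inr_inl_inr_inr (u : Unit) :
    (mycielskian G).Adj (.inr (.inl v)) (.inr (.inr u)) := by
  simp [mycielskian]

def Coloring.toMycielskian (c : G.Coloring α) : (mycielskian G).Coloring (Option α) :=
  Coloring.mk (Sum.elim (some ∘ c) (Sum.elim (some ∘ c) fun _ => none)) <| by
    rintro (v | v | u) (w | w | u') h <;> simp [mycielskian, G.adj_comm w v] at h ⊢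
    all_goals first | exact c.valid h | exact c.valid h.2

def Coloring.ofMycielskian [DecidableEq α] (c : (mycielskian G).Coloring α) :
    G.Coloring {a // a ≠ c (.inr (.inr ()))} :=
  Coloring.mk
    (fun v => if hv : c (.inl v) = c (.inr (.inr ())) then
      ⟨c (.inr (.inl v)), c.valid (mycielskian_adj_inr_inl_inr_inr _)⟩ else ⟨c (.inl v), hv⟩) <| by
    intro v w hvw
    have hv'w := c.valid (mycielskian_adj_inl_inr_inl.2 hvw.symm)
    have hvw' := c.valid (mycielskian_adj_inl_inr_inl.2 hvw)
    have hvw₀ := c.valid (mycielskian_adj_inl_inl.2 hvw)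
    split_ifs with hv hw hw <;> simp only [ne_eq, Subtype.mk.injEq]
    · exact fun _ => hvw₀ (hv.trans hw.symm)
    · exact fun h => hv'w h.symm
    · exact hvw'
    · exact hvw₀

theorem Colorable.mycielskian_succ {n : ℕ} (h : G.Colorable n) :
    (mycielskian G).Colorable (n + 1) := by
  obtain ⟨c⟩ := h
  simpa using c.toMycielskian.colorable

theorem Colorable.of_mycielskian_succ {n : ℕ} (h : (mycielskian G).Colorable (n + 1)) :
    G.Colorable n := by
  obtain ⟨c⟩ := h
  simpa [Fintype.card_subtype_compl] using c.ofMycielskian.colorable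

theorem mycielskian_colorable_succ_iff {n : ℕ} :
    (mycielskian G).Colorable (n + 1) ↔ G.Colorable n :=
  ⟨Colorable.of_mycielskian_succ, Colorable.mycielskian_succ⟩

end SimpleGraph

theorem stmt5 {V : Type*} (G : SimpleGraph V) :
    (mycielskian G).chromaticNumber = G.chromaticNumber + 1 := by
  refine ENat.eq_of_forall_le_natCast_iff fun n => ?_
  cases n with
  | zero => simp
  | succ n =>
    rw [chromaticNumber_le_iff_colorable, mycielskian_colorable_succ_iff, Nat.cast_succ,
      ENat.add_le_add_iff_right ENat.one_ne_top, chromaticNumber_le_iff_colorable]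
end
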